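/- Let a ∈ ℝ and r ∈ ℝ with r ≠ 0. There is a 5-dimensional real Lie algebra 𝔤 with basis e₁,...,e₅ and dual basis e¹,...,e⁵ whose Chevalley–Eilenberg differentials satisfy (writing e^{ij} for eⁱ∧eʲ): de¹ = 0, de² = r e^{14} − r e^{23} − a r e^{25} + r² e^{35}, de³ = a e^{14} − a e^{23} − a² e^{25} + a r e^{35}, de⁴ = r e^{12} + a e^{13} − (a² + r²) e^{15} + a e^{24} − r e^{34}, de⁵ = −2e^{14} − 2e^{23} (i.e., the bracket determined by these equations satisfies the Jacobi identity). Moreover, 𝔤 is solvable, the quadruplet η = e⁵, ω₁ = e^{12} + e^{34}, ω₂ = e^{13} − e^{24}, ω₃ = e^{14} + e^{23} is a hypo-contact structure on 𝔤, and 𝔤 is isomorphic to 𝔥₄. -/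

import Mathlib

noncomputable section

/-- Chevalley–Eilenberg differential of a 1-form on a Lie algebra. -/
def dOne {V : Type*} [LieRing V] [LieAlgebra ℝ V] (α : V → ℝ) (x y : V) : ℝ :=
  -α ⁅x, y⁆

/-- Chevalley–Eilenberg differential of a 2-form on a Lie algebra. -/
def dTwo {V : Type*} [LieRing V] [LieAlgebra ℝ V] (ω : V → V → ℝ) (x y z : V) : ℝ :=
  -ω ⁅x, y⁆ z + ω ⁅x, z⁆ y - ω ⁅y, z⁆ x

/-- Chevalley–Eilenberg differential of a 3-form on a Lie algebra. -/
def dThree {V : Type*} [LieRing V] [LieAlgebra ℝ V] (σ : V → V → V → ℝ)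
    (x y z w : V) : ℝ :=
  -σ ⁅x, y⁆ z w + σ ⁅x, z⁆ y w - σ ⁅x, w⁆ y z
    - σ ⁅y, z⁆ x w + σ ⁅y, w⁆ x z - σ ⁅z, w⁆ x y

/-- Wedge product of two 1-forms, as an alternating bilinear map. -/
def wedge1 {V : Type*} [LieRing V] [LieAlgebra ℝ V] (α β : V →ₗ[ℝ] ℝ) :
    V →ₗ[ℝ] V →ₗ[ℝ] ℝ :=
  LinearMap.mk₂ ℝ (fun x y => α x * β y - α y * β x)
    (fun m₁ m₂ n => by simp [map_add]; ring)
    (fun c m n => by simp [map_smul, smul_eq_mul]; ring)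
    (fun m n₁ n₂ => by simp [map_add]; ring)
    (fun c m n => by simp [map_smul, smul_eq_mul]; ring)

/-- Wedge product of a 1-form and a 2-form. -/
def wedge12 {V : Type*} (α : V → ℝ) (ω : V → V → ℝ) (x y z : V) : ℝ :=
  α x * ω y z - α y * ω x z + α z * ω x y

/-- Wedge product of two 2-forms. -/
def wedge22 {V : Type*} (ω τ : V → V → ℝ) (x y z w : V) : ℝ :=
  ω x y * τ z w - ω x z * τ y w + ω x w * τ y z
    + ω y z * τ x w - ω y w * τ x z + ω z w * τ x y

/-- Wedge product of a 4-form and a 1-form. -/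
def wedge41 {V : Type*} (v : V → V → V → V → ℝ) (α : V → ℝ)
    (x₀ x₁ x₂ x₃ x₄ : V) : ℝ :=
  α x₀ * v x₁ x₂ x₃ x₄ - α x₁ * v x₀ x₂ x₃ x₄ + α x₂ * v x₀ x₁ x₃ x₄
    - α x₃ * v x₀ x₁ x₂ x₄ + α x₄ * v x₀ x₁ x₂ x₃

/-- An SU(2)-structure on a 5-dimensional real Lie algebra. -/
structure IsSU2Structure {V : Type*} [LieRing V] [LieAlgebra ℝ V]
    (η : V →ₗ[ℝ] ℝ) (ω₁ ω₂ ω₃ : V →ₗ[ℝ] V →ₗ[ℝ] ℝ) : Prop where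
  alt1 : ∀ x, ω₁ x x = 0
  alt2 : ∀ x, ω₂ x x = 0
  alt3 : ∀ x, ω₃ x x = 0
  vol : ∃ v : V → V → V → V → ℝ,
    wedge22 (fun a b => ω₁ a b) (fun a b => ω₁ a b) = v ∧
    wedge22 (fun a b => ω₂ a b) (fun a b => ω₂ a b) = v ∧
    wedge22 (fun a b => ω₃ a b) (fun a b => ω₃ a b) = v ∧
    wedge22 (fun a b => ω₁ a b) (fun a b => ω₂ a b) = (fun _ _ _ _ => 0) ∧
    wedge22 (fun a b => ω₁ a b) (fun a b => ω₃ a b) = (fun _ _ _ _ => 0) ∧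
    wedge22 (fun a b => ω₂ a b) (fun a b => ω₃ a b) = (fun _ _ _ _ => 0) ∧
    wedge41 v (fun x => η x) ≠ (fun _ _ _ _ _ => 0)
  compat : ∀ X Y : V, (∀ z, ω₃ X z = ω₁ Y z) → 0 ≤ ω₂ X Y

/-- A hypo-contact structure on a 5-dimensional real Lie algebra. -/
structure IsHypoContact {V : Type*} [LieRing V] [LieAlgebra ℝ V]
    (η : V →ₗ[ℝ] ℝ) (ω₁ ω₂ ω₃ : V →ₗ[ℝ] V →ₗ[ℝ] ℝ)
    extends IsSU2Structure η ω₁ ω₂ ω₃ : Prop where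
  contact : ∀ x y, dOne (fun z => η z) x y = -2 * ω₃ x y
  closed1 : ∀ x y z w, dThree (wedge12 (fun z => η z) (fun a b => ω₁ a b)) x y z w = 0
  closed2 : ∀ x y z w, dThree (wedge12 (fun z => η z) (fun a b => ω₂ a b)) x y z w = 0

/-- The Lie algebra `𝔥₁`. -/
def IsH1 (V : Type*) [LieRing V] [LieAlgebra ℝ V] : Prop :=
  ∃ X : Module.Basis (Fin 5) ℝ V,
    ⁅X 0, X 1⁆ = 0 ∧ ⁅X 0, X 2⁆ = 0 ∧ ⁅X 0, X 3⁆ = X 4 ∧ ⁅X 0, X 4⁆ = 0 ∧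
    ⁅X 1, X 2⁆ = X 4 ∧ ⁅X 1, X 3⁆ = 0 ∧ ⁅X 1, X 4⁆ = 0 ∧
    ⁅X 2, X 3⁆ = 0 ∧ ⁅X 2, X 4⁆ = 0 ∧ ⁅X 3, X 4⁆ = 0

/-- The Lie algebra `𝔥₂`. -/
def IsH2 (V : Type*) [LieRing V] [LieAlgebra ℝ V] : Prop :=
  ∃ X : Module.Basis (Fin 5) ℝ V,
    ⁅X 0, X 1⁆ = 0 ∧ ⁅X 0, X 2⁆ = 0 ∧ ⁅X 0, X 3⁆ = 0 ∧ ⁅X 0, X 4⁆ = (2 : ℝ) • X 0 ∧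
    ⁅X 1, X 2⁆ = X 0 ∧ ⁅X 1, X 3⁆ = 0 ∧ ⁅X 1, X 4⁆ = X 1 ∧
    ⁅X 2, X 3⁆ = 0 ∧ ⁅X 2, X 4⁆ = X 2 ∧ ⁅X 3, X 4⁆ = (-3 : ℝ) • X 3

/-- The Lie algebra `𝔥₃`. -/
def IsH3 (V : Type*) [LieRing V] [LieAlgebra ℝ V] : Prop :=
  ∃ X : Module.Basis (Fin 5) ℝ V,
    ⁅X 0, X 1⁆ = 0 ∧ ⁅X 0, X 2⁆ = 0 ∧ ⁅X 0, X 3⁆ = (2 : ℝ) • X 0 ∧ ⁅X 0, X 4⁆ = 0 ∧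
    ⁅X 1, X 2⁆ = X 0 ∧ ⁅X 1, X 3⁆ = X 1 ∧ ⁅X 1, X 4⁆ = -X 2 ∧
    ⁅X 2, X 3⁆ = X 2 ∧ ⁅X 2, X 4⁆ = X 1 ∧ ⁅X 3, X 4⁆ = 0

/-- The Lie algebra `𝔥₄`. -/
def IsH4 (V : Type*) [LieRing V] [LieAlgebra ℝ V] : Prop :=
  ∃ X : Module.Basis (Fin 5) ℝ V,
    ⁅X 0, X 1⁆ = 0 ∧ ⁅X 0, X 2⁆ = 0 ∧ ⁅X 0, X 3⁆ = X 0 ∧ ⁅X 0, X 4⁆ = 0 ∧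
    ⁅X 1, X 2⁆ = 0 ∧ ⁅X 1, X 3⁆ = 0 ∧ ⁅X 1, X 4⁆ = X 1 ∧
    ⁅X 2, X 3⁆ = -X 2 ∧ ⁅X 2, X 4⁆ = -X 2 ∧ ⁅X 3, X 4⁆ = 0

/-- The Lie algebra `𝔥₅`. -/
def IsH5 (V : Type*) [LieRing V] [LieAlgebra ℝ V] : Prop :=
  ∃ X : Module.Basis (Fin 5) ℝ V,
    ⁅X 0, X 1⁆ = 0 ∧ ⁅X 0, X 2⁆ = 0 ∧ ⁅X 0, X 3⁆ = 0 ∧ ⁅X 0, X 4⁆ = X 0 ∧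
    ⁅X 1, X 2⁆ = 0 ∧ ⁅X 1, X 3⁆ = X 0 ∧ ⁅X 1, X 4⁆ = 0 ∧
    ⁅X 2, X 3⁆ = X 1 ∧ ⁅X 2, X 4⁆ = -X 2 ∧ ⁅X 3, X 4⁆ = X 3

/-- `e^{ij}`, the wedge of the `i`-th and `j`-th dual basis 1-forms. -/
def bw {V : Type*} [LieRing V] [LieAlgebra ℝ V] (e : Module.Basis (Fin 5) ℝ V) (i j : Fin 5) :
    V →ₗ[ℝ] V →ₗ[ℝ] ℝ :=
  wedge1 (e.coord i) (e.coord j)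

/-- The content of Statement 5: structure equations, solvability, hypo-contact structure
and the isomorphism type, for a Lie algebra `V`. -/
def GoodLieAlgebra5 (a r : ℝ) (V : Type) [LieRing V] [LieAlgebra ℝ V] : Prop :=
  LieAlgebra.IsSolvable V ∧
  ∃ e : Module.Basis (Fin 5) ℝ V,
      (∀ x y : _, dOne (⇑(e.coord 0)) x y = 0) ∧
      (∀ x y : _, dOne (⇑(e.coord 1)) x y = (r) * bw e 0 3 x y + (-r) * bw e 1 2 x y + (-a*r) * bw e 1 4 x y + (r^2) * bw e 2 4 x y) ∧
      (∀ x y : _, dOne (⇑(e.coord 2)) x y = (a) * bw e 0 3 x y + (-a) * bw e 1 2 x y + (-a^2) * bw e 1 4 x y + (a*r) * bw e 2 4 x y) ∧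
      (∀ x y : _, dOne (⇑(e.coord 3)) x y = (r) * bw e 0 1 x y + (a) * bw e 0 2 x y + (-(a^2+r^2)) * bw e 0 4 x y + (a) * bw e 1 3 x y + (-r) * bw e 2 3 x y) ∧
      (∀ x y : _, dOne (⇑(e.coord 4)) x y = (-2) * bw e 0 3 x y + (-2) * bw e 1 2 x y) ∧
      IsHypoContact (e.coord 4) (bw e 0 1 + bw e 2 3) (bw e 0 2 - bw e 1 3) (bw e 0 3 + bw e 1 2) ∧
      IsH4 V

/-!
The bracket on `ℝ⁵` is defined so that the structure equations hold by construction
(`e^k ⁅x, y⁆ = -de^k (x, y)`), and the Jacobi identity is then a polynomial identity.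
Brackets of brackets vanish identically, so `𝔤` is metabelian, hence solvable. The forms
`η, ω₁, ω₂, ω₃` are the standard `SU(2)`-structure of any coframe, and the hypo-contact
equations are direct computations. Finally, `(0, r, a, ±q, -2)` and `(0, r, a, 0, 1)` span the
abelian ideal `{x₀ = 0, a x₁ = r x₂}` and are common eigenvectors of `ad X₃`, `ad X₄` for a
suitable complement `X₃, X₄`; with `q = √(3(a² + r²))` the eigenvalues become those of `𝔥₄`.
-/

theorem LieAlgebra.isSolvable_of_lie_lie_lie_lie {L : Type*} [LieRing L]
    (h : ∀ x y z w : L, ⁅⁅x, y⁆, ⁅z, w⁆⁆ = 0) : LieAlgebra.IsSolvable L := by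
  refine IsSolvable.mk (R := ℤ) (k := 2) ?_
  rw [derivedSeries_def, derivedSeriesOfIdeal_succ, ← derivedSeries_def,
    LieSubmodule.lie_eq_bot_iff]
  intro u hu v hv
  replace hu : u ∈ Submodule.span ℤ {⁅x, y⁆ | (x : L) (y : L)} :=
    coe_derivedSeries_one_eq ℤ L ▸ hu
  replace hv : v ∈ Submodule.span ℤ {⁅x, y⁆ | (x : L) (y : L)} :=
    coe_derivedSeries_one_eq ℤ L ▸ hv
  induction hu using Submodule.span_induction with
  | mem u hu =>
    obtain ⟨x, y, rfl⟩ := hu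
    induction hv using Submodule.span_induction with
    | mem v hv => obtain ⟨z, w, rfl⟩ := hv; exact h x y z w
    | zero => simp
    | add _ _ _ _ h₁ h₂ => simp [h₁, h₂]
    | smul _ _ _ h => simp [h]
  | zero => simp
  | add _ _ _ _ h₁ h₂ => simp [h₁, h₂]
  | smul _ _ _ h => simp [h]

section StandardSU2

variable {V : Type*} [LieRing V] [LieAlgebra ℝ V] (e : Module.Basis (Fin 5) ℝ V)

lemma bw_apply (i j : Fin 5) (x y : V) :
    bw e i j x y = e.coord i x * e.coord j y - e.coord i y * e.coord j x := rfl

theorem isSU2Structure_standard :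
    IsSU2Structure (e.coord 4) (bw e 0 1 + bw e 2 3) (bw e 0 2 - bw e 1 3)
      (bw e 0 3 + bw e 1 2) := by
  refine ⟨?_, ?_, ?_, ⟨_, rfl, ?_, ?_, ?_, ?_, ?_, ?_⟩, ?_⟩
  iterate 3 intro x; simp only [LinearMap.add_apply, LinearMap.sub_apply, bw_apply]; ring
  iterate 5
    funext x y z w
    simp only [wedge22, LinearMap.add_apply, LinearMap.sub_apply, bw_apply]
    ring
  · intro h
    have := congrFun (congrFun (congrFun (congrFun (congrFun h (e 0)) (e 1)) (e 2)) (e 3)) (e 4)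
    simp [wedge41, wedge22, bw_apply] at this
  · -- `i_X ω₃ = i_Y ω₁` forces `Y = (-X₂, X₃, X₀, -X₁, _)`, so `ω₂ (X, Y) = X₀² + X₁² + X₂² + X₃²`.
    intro X Y h
    have h0 := h (e 0)
    have h1 := h (e 1)
    have h2 := h (e 2)
    have h3 := h (e 3)
    simp only [LinearMap.add_apply, LinearMap.sub_apply, bw_apply, Module.Basis.coord_apply,
      Module.Basis.repr_self, ne_eq, Fin.reduceEq, not_false_eq_true, Finsupp.single_eq_of_ne,
      Finsupp.single_eq_same, mul_zero, zero_mul, one_mul, mul_one, sub_self, zero_sub, sub_zero,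
      add_zero, zero_add, neg_inj] at h0 h1 h2 h3 ⊢
    rw [← h0, ← h1, ← h3, show e.repr Y 3 = -e.repr X 1 by linarith]
    nlinarith [sq_nonneg (e.repr X 0), sq_nonneg (e.repr X 1), sq_nonneg (e.repr X 2),
      sq_nonneg (e.repr X 3)]

end StandardSU2

def HypoAlgebra (_a _r : ℝ) : Type := Fin 5 → ℝ

namespace HypoAlgebra

variable {a r : ℝ}

instance : AddCommGroup (HypoAlgebra a r) := inferInstanceAs (AddCommGroup (Fin 5 → ℝ))
instance : Module ℝ (HypoAlgebra a r) := inferInstanceAs (Module ℝ (Fin 5 → ℝ))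

@[simp] lemma add_apply (x y : HypoAlgebra a r) (i : Fin 5) : (x + y) i = x i + y i := rfl
@[simp] lemma smul_apply (c : ℝ) (x : HypoAlgebra a r) (i : Fin 5) : (c • x) i = c * x i := rfl
@[simp] lemma zero_apply (i : Fin 5) : (0 : HypoAlgebra a r) i = 0 := rfl
@[simp] lemma neg_apply (x : HypoAlgebra a r) (i : Fin 5) : (-x) i = -x i := rfl

-- Vector literals `![…]` are built at type `Fin 5 → ℝ` and then wrapped: elaborated directly at
-- type `HypoAlgebra a r` they trip up the `Fin`-vector simprocs.
def ofFun (v : Fin 5 → ℝ) : HypoAlgebra a r := v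

@[simp] lemma ofFun_apply (v : Fin 5 → ℝ) (i : Fin 5) : (ofFun v : HypoAlgebra a r) i = v i := rfl

def bracket (x y : HypoAlgebra a r) : HypoAlgebra a r := ofFun
  ![0,
    -(r * (x 0 * y 3 - x 3 * y 0) - r * (x 1 * y 2 - x 2 * y 1)
      - a * r * (x 1 * y 4 - x 4 * y 1) + r ^ 2 * (x 2 * y 4 - x 4 * y 2)),
    -(a * (x 0 * y 3 - x 3 * y 0) - a * (x 1 * y 2 - x 2 * y 1)
      - a ^ 2 * (x 1 * y 4 - x 4 * y 1) + a * r * (x 2 * y 4 - x 4 * y 2)),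
    -(r * (x 0 * y 1 - x 1 * y 0) + a * (x 0 * y 2 - x 2 * y 0)
      - (a ^ 2 + r ^ 2) * (x 0 * y 4 - x 4 * y 0) + a * (x 1 * y 3 - x 3 * y 1)
      - r * (x 2 * y 3 - x 3 * y 2)),
    -(-2 * (x 0 * y 3 - x 3 * y 0) - 2 * (x 1 * y 2 - x 2 * y 1))]

instance : LieRing (HypoAlgebra a r) where
  bracket := bracket
  add_lie x y z := by funext k; fin_cases k <;> simp [bracket] <;> ring
  lie_add x y z := by funext k; fin_cases k <;> simp [bracket] <;> ring
  lie_self x := by funext k; fin_cases k <;> simp [bracket] <;> ring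
  leibniz_lie x y z := by funext k; fin_cases k <;> simp [bracket] <;> ring

lemma lie_def (x y : HypoAlgebra a r) : ⁅x, y⁆ = bracket x y := rfl

instance : LieAlgebra ℝ (HypoAlgebra a r) where
  lie_smul c x y := by funext k; fin_cases k <;> simp [lie_def, bracket] <;> ring

lemma lie_lie_lie_lie (x y z w : HypoAlgebra a r) : ⁅⁅x, y⁆, ⁅z, w⁆⁆ = 0 := by
  funext k; fin_cases k <;> simp [lie_def, bracket] <;> ring

noncomputable def stdBasis (a r : ℝ) : Module.Basis (Fin 5) ℝ (HypoAlgebra a r) :=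
  Module.Basis.ofEquivFun (LinearEquiv.refl ℝ (Fin 5 → ℝ))

lemma stdBasis_coord_apply (i : Fin 5) (x : HypoAlgebra a r) : (stdBasis a r).coord i x = x i := rfl

lemma dOne_coord_zero (x y : HypoAlgebra a r) : dOne ⇑((stdBasis a r).coord 0) x y = 0 := by
  simp only [dOne, stdBasis_coord_apply, lie_def, bracket, ofFun_apply, Matrix.cons_val_zero,
    neg_zero]

lemma dOne_coord_one (x y : HypoAlgebra a r) :
    dOne ⇑((stdBasis a r).coord 1) x y = r * bw (stdBasis a r) 0 3 x y
      + (-r) * bw (stdBasis a r) 1 2 x y + (-a * r) * bw (stdBasis a r) 1 4 x y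
      + r ^ 2 * bw (stdBasis a r) 2 4 x y := by
  simp only [dOne, bw_apply, stdBasis_coord_apply, lie_def, bracket, ofFun_apply,
    Matrix.cons_val_zero, Matrix.cons_val_one]
  ring

lemma dOne_coord_two (x y : HypoAlgebra a r) :
    dOne ⇑((stdBasis a r).coord 2) x y = a * bw (stdBasis a r) 0 3 x y
      + (-a) * bw (stdBasis a r) 1 2 x y + (-a ^ 2) * bw (stdBasis a r) 1 4 x y
      + (a * r) * bw (stdBasis a r) 2 4 x y := by
  simp only [dOne, bw_apply, stdBasis_coord_apply, lie_def, bracket, ofFun_apply,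
    Matrix.cons_val]
  ring

lemma dOne_coord_three (x y : HypoAlgebra a r) :
    dOne ⇑((stdBasis a r).coord 3) x y = r * bw (stdBasis a r) 0 1 x y
      + a * bw (stdBasis a r) 0 2 x y + (-(a ^ 2 + r ^ 2)) * bw (stdBasis a r) 0 4 x y
      + a * bw (stdBasis a r) 1 3 x y + (-r) * bw (stdBasis a r) 2 3 x y := by
  simp only [dOne, bw_apply, stdBasis_coord_apply, lie_def, bracket, ofFun_apply,
    Matrix.cons_val]
  ring

lemma dOne_coord_four (x y : HypoAlgebra a r) :
    dOne ⇑((stdBasis a r).coord 4) x y =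
      (-2) * bw (stdBasis a r) 0 3 x y + (-2) * bw (stdBasis a r) 1 2 x y := by
  simp only [dOne, bw_apply, stdBasis_coord_apply, lie_def, bracket, ofFun_apply,
    Matrix.cons_val]
  ring

theorem isHypoContact :
    IsHypoContact ((stdBasis a r).coord 4)
      (bw (stdBasis a r) 0 1 + bw (stdBasis a r) 2 3)
      (bw (stdBasis a r) 0 2 - bw (stdBasis a r) 1 3)
      (bw (stdBasis a r) 0 3 + bw (stdBasis a r) 1 2) := by
  refine ⟨isSU2Structure_standard _, fun x y => ?_, fun x y z w => ?_, fun x y z w => ?_⟩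
  · rw [dOne_coord_four, LinearMap.add_apply, LinearMap.add_apply]; ring
  all_goals
    simp only [dThree, wedge12, LinearMap.add_apply, LinearMap.sub_apply, bw_apply,
      stdBasis_coord_apply, lie_def, bracket, ofFun_apply, Matrix.cons_val_zero,
      Matrix.cons_val_one, Matrix.cons_val]
    ring

noncomputable def h4Frame (a r q : ℝ) : Fin 5 → HypoAlgebra a r :=
  ![ofFun ![0, r, a, q, -2], ofFun ![0, r, a, -q, -2], ofFun ![0, r, a, 0, 1],
    ofFun ![1 / (2 * q), a / (2 * (a ^ 2 + r ^ 2)), -r / (2 * (a ^ 2 + r ^ 2)), 0, 0],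
    ofFun ![-1 / (2 * q), a / (2 * (a ^ 2 + r ^ 2)), -r / (2 * (a ^ 2 + r ^ 2)), 0, 0]]

lemma sq_add_sq_ne_zero_of_sq_eq {q : ℝ} (hq : q ^ 2 = 3 * (a ^ 2 + r ^ 2)) (hq0 : q ≠ 0) :
    a ^ 2 + r ^ 2 ≠ 0 := by
  rintro h
  exact hq0 (pow_eq_zero_iff two_ne_zero |>.1 (by rw [hq, h, mul_zero]))

lemma linearIndependent_h4Frame {q : ℝ} (hq : q ^ 2 = 3 * (a ^ 2 + r ^ 2)) (hq0 : q ≠ 0) :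
    LinearIndependent ℝ (h4Frame a r q) := by
  have hs := sq_add_sq_ne_zero_of_sq_eq hq hq0
  refine Fintype.linearIndependent_iff.2 fun c hc => ?_
  have h := fun k => congrFun hc k
  simp only [Fin.sum_univ_five, h4Frame] at h
  have h0 := h 0
  have h1 := h 1
  have h2 := h 2
  have h3 := h 3
  have h4 := h 4
  simp only [Matrix.cons_val_zero, Matrix.cons_val_one, Matrix.cons_val, add_apply, smul_apply,
    ofFun_apply, zero_apply] at h0 h1 h2 h3 h4
  intro i; fin_cases i <;> grind

theorem isH4_of_sq_eq {q : ℝ} (hq : q ^ 2 = 3 * (a ^ 2 + r ^ 2)) (hq0 : q ≠ 0) :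
    IsH4 (HypoAlgebra a r) := by
  have hs := sq_add_sq_ne_zero_of_sq_eq hq hq0
  refine ⟨basisOfLinearIndependentOfCardEqFinrank (linearIndependent_h4Frame hq hq0)
    (by simp [Module.finrank_eq_card_basis (stdBasis a r)]), ?_⟩
  simp only [coe_basisOfLinearIndependentOfCardEqFinrank]
  refine ⟨?_, ?_, ?_, ?_, ?_, ?_, ?_, ?_, ?_, ?_⟩ <;> funext k <;> fin_cases k <;>
    simp [lie_def, bracket, h4Frame] <;> field_simp <;> grind

end HypoAlgebra

theorem exists_good_lie_algebra5 (a r : ℝ) (hr : r ≠ 0) :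
    ∃ (V : Type) (i₁ : LieRing V) (i₂ : @LieAlgebra ℝ V _ i₁),
      @GoodLieAlgebra5 a r V i₁ i₂ := by
  exact ⟨HypoAlgebra a r, inferInstance, inferInstance,
    LieAlgebra.isSolvable_of_lie_lie_lie_lie HypoAlgebra.lie_lie_lie_lie, HypoAlgebra.stdBasis a r,
    HypoAlgebra.dOne_coord_zero, HypoAlgebra.dOne_coord_one, HypoAlgebra.dOne_coord_two,
    HypoAlgebra.dOne_coord_three, HypoAlgebra.dOne_coord_four, HypoAlgebra.isHypoContact,
    HypoAlgebra.isH4_of_sq_eq (Real.sq_sqrt (by positivity)) (Real.sqrt_pos.2 (by positivity)).ne'⟩
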